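/- Clopper–Pearson upper bound coverage: Let X ~ B(M, p) with M ≥ 1 and p ∈ [0,1], and β ∈ (0,1). Define U(M) = 1, and for k < M define U(k) as the unique q ∈ (0,1] with Σ_{ℓ=0}^{k} C(M,ℓ) qˡ (1−q)^{M−ℓ} = β/2 if such q exists in (0,1], else U(k) = 1. Then ℙ(p ≤ U(X)) ≥ 1 − β/2. -/

import Mathlib

/-!
The binomial lower tail `q ↦ ℙ(B(M, q) ≤ k)` is a sum of Bernstein polynomials whose derivative
telescopes to `-M` times a single Bernstein polynomial, so it is antitone on `[0, 1]`. If `k₀` is the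
largest outcome with `U k₀ < p`, then `k₀ < M` and `U k₀` solves the tail equation, so the
non-covering outcomes carry probability at most `ℙ_p(X ≤ k₀) ≤ ℙ_{U k₀}(X ≤ k₀) = β / 2`.
-/

open Finset Polynomial

theorem bernsteinPolynomial.eval_eq {R : Type*} [CommRing R] (n ν : ℕ) (x : R) :
    (bernsteinPolynomial R n ν).eval x = n.choose ν * x ^ ν * (1 - x) ^ (n - ν) := by
  simp [bernsteinPolynomial]

theorem bernsteinPolynomial.eval_nonneg {n ν : ℕ} {x : ℝ} (hx : x ∈ Set.Icc (0 : ℝ) 1) :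
    0 ≤ (bernsteinPolynomial ℝ n ν).eval x :=
  bernstein_nonneg (x := ⟨x, hx⟩)

theorem bernsteinPolynomial.derivative_sum_range {R : Type*} [CommRing R] (n k : ℕ) :
    derivative (∑ ν ∈ range (k + 1), bernsteinPolynomial R n ν) =
      -n * bernsteinPolynomial R (n - 1) k := by
  induction k with
  | zero => simp [derivative_zero]
  | succ k ih =>
    rw [sum_range_succ, derivative_add, ih, derivative_succ]
    ring

noncomputable def binomialLowerTail (M k : ℕ) (q : ℝ) : ℝ :=
  ∑ ℓ ∈ range (k + 1), (M.choose ℓ : ℝ) * q ^ ℓ * (1 - q) ^ (M - ℓ)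

theorem binomialLowerTail_eq_eval (M k : ℕ) (q : ℝ) :
    binomialLowerTail M k q = (∑ ℓ ∈ range (k + 1), bernsteinPolynomial ℝ M ℓ).eval q := by
  simp [binomialLowerTail, eval_finsetSum, bernsteinPolynomial.eval_eq]

theorem antitoneOn_binomialLowerTail (M k : ℕ) :
    AntitoneOn (binomialLowerTail M k) (Set.Icc 0 1) := by
  rw [funext (binomialLowerTail_eq_eval M k)]
  refine antitoneOn_of_deriv_nonpos (convex_Icc 0 1) (Polynomial.continuousOn _)
    (Polynomial.differentiable _).differentiableOn fun x hx => ?_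
  rw [Polynomial.deriv, bernsteinPolynomial.derivative_sum_range, eval_mul, eval_neg, eval_natCast,
    neg_mul, neg_nonpos]
  exact mul_nonneg M.cast_nonneg (bernsteinPolynomial.eval_nonneg (interior_subset hx))

theorem binomialLowerTail_le_of_lt {M k : ℕ} {p u c : ℝ} (hp : p ≤ 1) (hup : u < p)
    (hu : ((∃ q ∈ Set.Ioc (0 : ℝ) 1, binomialLowerTail M k q = c) →
        u ∈ Set.Ioc (0 : ℝ) 1 ∧ binomialLowerTail M k u = c) ∧
      ((¬ ∃ q ∈ Set.Ioc (0 : ℝ) 1, binomialLowerTail M k q = c) → u = 1)) :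
    binomialLowerTail M k p ≤ c := by
  have hsolvable : ∃ q ∈ Set.Ioc (0 : ℝ) 1, binomialLowerTail M k q = c := by
    by_contra h
    linarith [hu.2 h]
  obtain ⟨⟨hu0, hu1⟩, hu_eq⟩ := hu.1 hsolvable
  exact hu_eq ▸ antitoneOn_binomialLowerTail M k ⟨hu0.le, hu1⟩ ⟨hu0.le.trans hup.le, hp⟩ hup.le

theorem sum_ite_binomial_eq_one_sub (M : ℕ) (q : ℝ) (P : ℕ → Prop) [DecidablePred P] :
    ∑ k ∈ range (M + 1), (if P k then (M.choose k : ℝ) * q ^ k * (1 - q) ^ (M - k) else 0) =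
      1 - ∑ k ∈ (range (M + 1)).filter (fun k => ¬ P k),
        (M.choose k : ℝ) * q ^ k * (1 - q) ^ (M - k) := by
  have htotal := congr_arg (eval q) (bernsteinPolynomial.sum ℝ M)
  simp only [eval_finsetSum, bernsteinPolynomial.eval_eq, eval_one] at htotal
  rw [← sum_filter, eq_sub_iff_add_eq, sum_filter_add_sum_filter_not, htotal]

theorem clopper_pearson_upper_coverage_general
    (M : ℕ) (p β : ℝ) (hp : p ∈ Set.Icc (0 : ℝ) 1)
    (hβ : β ∈ Set.Ioo (0 : ℝ) 1)
    (U : ℕ → ℝ)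
    (hUM : U M = 1)
    (hU : ∀ k, k < M →
      ((∃ q ∈ Set.Ioc (0 : ℝ) 1,
          ∑ ℓ ∈ Finset.range (k + 1), (M.choose ℓ : ℝ) * q ^ ℓ * (1 - q) ^ (M - ℓ) = β / 2) →
        (U k ∈ Set.Ioc (0 : ℝ) 1 ∧
          ∑ ℓ ∈ Finset.range (k + 1), (M.choose ℓ : ℝ) * (U k) ^ ℓ * (1 - U k) ^ (M - ℓ) = β / 2)) ∧
      ((¬ ∃ q ∈ Set.Ioc (0 : ℝ) 1,
          ∑ ℓ ∈ Finset.range (k + 1), (M.choose ℓ : ℝ) * q ^ ℓ * (1 - q) ^ (M - ℓ) = β / 2) →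
        U k = 1)) :
    1 - β / 2 ≤
      ∑ k ∈ Finset.range (M + 1),
        (if p ≤ U k then (M.choose k : ℝ) * p ^ k * (1 - p) ^ (M - k) else 0) := by
  obtain ⟨hp0, hp1⟩ := hp
  rw [sum_ite_binomial_eq_one_sub]
  set bad := (range (M + 1)).filter (fun k => ¬ p ≤ U k)
  suffices ∑ k ∈ bad, (M.choose k : ℝ) * p ^ k * (1 - p) ^ (M - k) ≤ β / 2 by linarith
  rcases bad.eq_empty_or_nonempty with hempty | hne
  · rw [hempty, sum_empty]
    linarith [hβ.1]
  set k₀ := bad.max' hne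
  obtain ⟨hk₀_range, hUk₀⟩ : k₀ ∈ range (M + 1) ∧ ¬ p ≤ U k₀ := mem_filter.mp (bad.max'_mem hne)
  have hk₀M : k₀ < M := by
    refine lt_of_le_of_ne (Nat.lt_succ_iff.mp (mem_range.mp hk₀_range)) fun h => ?_
    rw [h, hUM] at hUk₀
    exact hUk₀ hp1
  calc ∑ k ∈ bad, (M.choose k : ℝ) * p ^ k * (1 - p) ^ (M - k)
      ≤ binomialLowerTail M k₀ p :=
        sum_le_sum_of_subset_of_nonneg
          (fun k hk => mem_range.mpr (Nat.lt_succ_of_le (bad.le_max' k hk)))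
          fun k _ _ => bernsteinPolynomial.eval_eq (R := ℝ) M k p ▸
            bernsteinPolynomial.eval_nonneg ⟨hp0, hp1⟩
    _ ≤ β / 2 := binomialLowerTail_le_of_lt hp1 (not_le.mp hUk₀) (hU k₀ hk₀M)

/-- Clopper–Pearson upper bound coverage: for `X ~ B(M,p)` and the (random) upper
confidence bound `U(X)` (defined from the binomial lower tail equalling `β/2`, with
`U(M) = 1`), one has `ℙ(p ≤ U(X)) ≥ 1 − β/2` for every true `p ∈ [0,1]`.  The
probability over the draw of `X` is written as the explicit binomial sum. -/
theorem clopper_pearson_upper_coverage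
    (M : ℕ) (hM : 1 ≤ M) (p β : ℝ) (hp : p ∈ Set.Icc (0 : ℝ) 1)
    (hβ : β ∈ Set.Ioo (0 : ℝ) 1)
    (U : ℕ → ℝ)
    (hUM : U M = 1)
    (hU : ∀ k, k < M →
      ((∃ q ∈ Set.Ioc (0 : ℝ) 1,
          ∑ ℓ ∈ Finset.range (k + 1), (M.choose ℓ : ℝ) * q ^ ℓ * (1 - q) ^ (M - ℓ) = β / 2) →
        (U k ∈ Set.Ioc (0 : ℝ) 1 ∧
          ∑ ℓ ∈ Finset.range (k + 1), (M.choose ℓ : ℝ) * (U k) ^ ℓ * (1 - U k) ^ (M - ℓ) = β / 2)) ∧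
      ((¬ ∃ q ∈ Set.Ioc (0 : ℝ) 1,
          ∑ ℓ ∈ Finset.range (k + 1), (M.choose ℓ : ℝ) * q ^ ℓ * (1 - q) ^ (M - ℓ) = β / 2) →
        U k = 1)) :
    1 - β / 2 ≤
      ∑ k ∈ Finset.range (M + 1),
        (if p ≤ U k then (M.choose k : ℝ) * p ^ k * (1 - p) ^ (M - k) else 0) :=
  clopper_pearson_upper_coverage_general M p β hp hβ U hUM hU
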